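/- arXiv:2112.03733 — 3 statements merged into one kernel-verified Lean document; each statement's English description precedes it below -/
import Mathlib

section
/- Let Σ⁺ and Σ⁻ be two finite sets of equal cardinality i+1 (i ≥ 0), arranged alternately in a single cyclic order (so that the cyclic successor map τ sends Σ⁻ to Σ⁺ and Σ⁺ to Σ⁻). Let ω : Σ⁻ → E⁻ and α : Σ⁺ → E⁺ be maps with the following property: for every c in the image of ω and every σ⁺ ∈ Σ⁺ that is adjacent to J = ω⁻¹(c) (meaning exactly one of τ(σ⁺), τ⁻¹(σ⁺) lies in J), there exists σ'⁺ ∈ Σ⁺, distinct from σ⁺, also adjacent to J, with α(σ'⁺) = α(σ⁺). Then #Im(α) + #Im(ω) ≤ i + 2. -/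
/-!
For each value `c ≠ ω 0` of `ω`, the cone `e_c` just before the first occurrence of `c` is
adjacent to `ω⁻¹(c)`, and every other cone adjacent to `ω⁻¹(c)` comes after it; so the
hypothesis yields a later cone with the same `α`-value, and `e_c` is never the last cone
carrying its `α`-value. Hence the cones `e_c` and the last cones of the values of `α` are
pairwise distinct, and `(#Im ω - 1) + #Im α ≤ i + 1`.
-/

namespace Fin

variable {n : ℕ} {E F : Type*} {ω : Fin (n + 1) → E} {c : E}

theorem exists_add_one_eq_of_ne_apply_zero (hc : c ∈ Set.range ω) (h0 : ω 0 ≠ c) :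
    ∃ e, ω (e + 1) = c ∧ ∀ j ≤ e, ω j ≠ c := by
  obtain ⟨f, hf, hmin⟩ := (Set.toFinite (ω ⁻¹' {c})).exists_minimal hc
  have hf0 : f ≠ 0 := by rintro rfl; exact h0 hf
  refine ⟨f - 1, by rwa [sub_add_cancel], fun j hj hjc => ?_⟩
  have hjf : j < f := hj.trans_lt (sub_one_lt_iff.mpr (pos_iff_ne_zero.mpr hf0))
  exact (hmin hjc hjf.le).not_gt hjf

theorem lt_of_apply_or_apply_add_one_eq {e k : Fin (n + 1)} (hbefore : ∀ j ≤ e, ω j ≠ c)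
    (hk : ω k = c ∨ ω (k + 1) = c) (hne : k ≠ e) : e < k := by
  by_contra! hke
  rcases hk with hk | hk
  · exact hbefore k hke hk
  · exact hbefore (k + 1) (add_one_le_of_lt (lt_of_le_of_ne hke hne)) hk

theorem exists_gt_apply_eq {α : Fin (n + 1) → F} {e : Fin (n + 1)} (he : ω (e + 1) = c)
    (hbefore : ∀ j ≤ e, ω j ≠ c)
    (h : ∀ k, Xor (ω k = c) (ω (k + 1) = c) →
      ∃ k' ≠ k, Xor (ω k' = c) (ω (k' + 1) = c) ∧ α k' = α k) :
    ∃ k, e < k ∧ α k = α e := by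
  obtain ⟨k, hke, hk, hα⟩ := h e (Or.inr ⟨he, hbefore e le_rfl⟩)
  exact ⟨k, lt_of_apply_or_apply_add_one_eq hbefore hk.or hke, hα⟩

theorem ncard_range_add_ncard_range_le (ω : Fin (n + 1) → E) (α : Fin (n + 1) → F)
    (h : ∀ c ∈ Set.range ω, ∀ k, Xor (ω k = c) (ω (k + 1) = c) →
      ∃ k' ≠ k, Xor (ω k' = c) (ω (k' + 1) = c) ∧ α k' = α k) :
    (Set.range α).ncard + (Set.range ω).ncard ≤ n + 2 := by
  choose! entry h_entry h_before using fun c (hc : c ∈ Set.range ω \ {ω 0}) =>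
    exists_add_one_eq_of_ne_apply_zero hc.1 (Ne.symm hc.2)
  choose! last h_last using fun p (hp : p ∈ Set.range α) =>
    (Set.toFinite (α ⁻¹' {p})).exists_maximal hp
  have h_disj : Disjoint (entry '' (Set.range ω \ {ω 0})) (last '' Set.range α) := by
    refine Set.disjoint_left.mpr ?_
    rintro _ ⟨c, hc, rfl⟩ ⟨p, hp, h_eq⟩
    obtain ⟨k, h_lt, hα⟩ := exists_gt_apply_eq (h_entry c hc) (h_before c hc) (h c hc.1)
    rw [← h_eq] at h_lt hα
    exact ((h_last p hp).le_of_ge (hα.trans (h_last p hp).prop) h_lt.le).not_gt h_lt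
  have h_entry_inj : Set.InjOn entry (Set.range ω \ {ω 0}) := fun c hc d hd hcd => by
    rw [← h_entry c hc, ← h_entry d hd, hcd]
  have h_last_inj : Set.InjOn last (Set.range α) := fun p hp q hq hpq => by
    rw [← (h_last p hp).prop, ← (h_last q hq).prop, hpq]
  have h_union := Set.ncard_union_eq h_disj
  rw [h_entry_inj.ncard_image, h_last_inj.ncard_image,
    Set.ncard_sdiff_singleton_of_mem (Set.mem_range_self 0)] at h_union
  have h_le_card : (entry '' (Set.range ω \ {ω 0}) ∪ last '' Set.range α).ncard ≤ n + 1 := by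
    simpa using Set.ncard_le_ncard (Set.subset_univ (entry '' (Set.range ω \ {ω 0}) ∪ _))
  have h_pos := (Set.ncard_pos (Set.toFinite _)).mpr (Set.range_nonempty ω)
  omega

end Fin

/-- `Σ⁻` and `Σ⁺` are both modelled by `ZMod (i + 1)`: the cone `σ⁺_k` has cyclic predecessor
`σ⁻_k` and cyclic successor `σ⁻_{k+1}`. -/
theorem stmt0 (i : ℕ) {Eneg Epos : Type*}
    (ω : ZMod (i + 1) → Eneg) (α : ZMod (i + 1) → Epos)
    (h : ∀ c : Eneg, c ∈ Set.range ω →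
      ∀ k : ZMod (i + 1), Xor' (ω k = c) (ω (k + 1) = c) →
        ∃ k' : ZMod (i + 1), k' ≠ k ∧ Xor' (ω k' = c) (ω (k' + 1) = c) ∧ α k' = α k) :
    (Set.range α).ncard + (Set.range ω).ncard ≤ i + 2 :=
  -- `ZMod (i + 1)` is `Fin (i + 1)` by definition.
  Fin.ncard_range_add_ncard_range_le ω α h
end

section
/- Let G be a finite connected graph with vertex set V and an injective function A : V → ℝ. For t ∈ ℝ let G⁻_t be the induced subgraph on {v : A(v) < t}. Call a vertex y a 'local minimum for the filtration' if y is isolated in G⁻_{A(y)⁺} \ G⁻_{A(y)} in the sense that all neighbors of y have strictly larger A-value. Then for every local minimum y with A(y) > min_{v∈V} A(v), there exists a vertex x with A(x) > A(y) such that: the connected component C of y in G⁻_{A(x)} satisfies min_{v∈C} A(v) = A(y), and the connected component of y in the induced subgraph on {v : A(v) ≤ A(x)} contains a vertex z with A(z) < A(y). -/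
open SimpleGraph

lemma reach_of_walk' {V : Type*} {G : SimpleGraph V} {s : Set V} :
    ∀ {a b : V} (p : G.Walk a b) (hp : ∀ u ∈ p.support, u ∈ s),
      (G.induce s).Reachable ⟨a, hp a p.start_mem_support⟩ ⟨b, hp b p.end_mem_support⟩ := by
  intro a b p
  induction p with
  | nil => intro hp; rfl
  | @cons a c b h q ih =>
      intro hp
      have hc : c ∈ s := hp c (by simp [SimpleGraph.Walk.support_cons])
      have h1 : (G.induce s).Adj ⟨a, hp a (by simp [SimpleGraph.Walk.support_cons])⟩ ⟨c, hc⟩ := h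
      refine h1.reachable.trans ?_
      exact ih (fun u hu => hp u (by simp [SimpleGraph.Walk.support_cons, hu]))

lemma walk_of_reach' {V : Type*} {G : SimpleGraph V} {s : Set V} {a b : s}
    (h : (G.induce s).Reachable a b) :
    ∃ p : G.Walk a.1 b.1, ∀ u ∈ p.support, u ∈ s := by
  obtain ⟨q⟩ := h
  refine ⟨q.map (SimpleGraph.Embedding.induce s).toHom, ?_⟩
  intro u hu
  erw [SimpleGraph.Walk.support_map, List.mem_map] at hu
  obtain ⟨w, _, rfl⟩ := hu
  exact w.2

/-- Elder rule pairing: in a finite connected graph with injective vertex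
function `A`, every local minimum `y` of the sublevel filtration which is not
the global minimum dies at some level `A(x) > A(y)`: the component of `y` in the
strict sublevel graph `{A < A(x)}` has minimum value `A(y)`, while the component
of `y` in `{A ≤ A(x)}` contains a vertex of value `< A(y)`. -/
theorem stmt4 {V : Type*} [Fintype V] (G : SimpleGraph V) (hconn : G.Connected)
    (A : V → ℝ) (hA : Function.Injective A) (y : V)
    (hloc : ∀ v : V, G.Adj y v → A y < A v)
    (hy : ∃ w : V, A w < A y) :
    ∃ x : V, ∃ hyx : A y < A x,
      (∀ (v : V) (hv : A v < A x),
        (G.induce {u : V | A u < A x}).Reachable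
          ⟨y, show A y < A x from hyx⟩ ⟨v, show A v < A x from hv⟩ → A y ≤ A v) ∧
      (∃ z : V, ∃ hz : A z ≤ A x,
        (G.induce {u : V | A u ≤ A x}).Reachable
          ⟨y, show A y ≤ A x from le_of_lt hyx⟩ ⟨z, show A z ≤ A x from hz⟩ ∧
        A z < A y) := by
  classical
  obtain ⟨w, hw⟩ := hy
  -- candidate set
  set P : Set V := {x | A y < A x ∧ ∃ z, A z < A y ∧
      ∃ p : G.Walk y z, ∀ u ∈ p.support, A u ≤ A x} with hP
  -- P is nonempty: take a global max
  have hne : P.Nonempty := by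
    have : Nonempty V := ⟨y⟩
    obtain ⟨x₀, hx₀⟩ := Finite.exists_max A
    obtain ⟨p⟩ := hconn.preconnected y w
    have hwy : w ≠ y := fun h => absurd hw (by rw [h]; exact lt_irrefl _)
    have hylt : A y < A x₀ := by
      cases p with
      | nil => exact absurd rfl hwy.symm
      | cons h q => exact lt_of_lt_of_le (hloc _ h) (hx₀ _)
    exact ⟨x₀, hylt, w, hw, p, fun u _ => hx₀ u⟩
  have hPfin : P.Finite := Set.toFinite P
  obtain ⟨x, hxP, hxmin⟩ := Set.exists_min_image P A hPfin hne
  obtain ⟨hyx, z, hz, p, hp⟩ := hxP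
  refine ⟨x, hyx, ?_, ?_⟩
  · -- first conjunct
    intro v hv hreach
    by_contra hvy
    push_neg at hvy
    obtain ⟨q, hq⟩ := walk_of_reach' hreach
    -- max over support of q
    obtain ⟨x', hx'mem, hx'max⟩ := q.support.toFinset.exists_max_image A
      ⟨y, List.mem_toFinset.mpr q.start_mem_support⟩
    replace hx'mem := List.mem_toFinset.mp hx'mem
    replace hx'max := fun u hu => hx'max u (List.mem_toFinset.mpr hu)
    have hyx' : A y ≤ A x' := hx'max y q.start_mem_support
    have hx'x : A x' < A x := hq x' hx'mem
    rcases lt_or_eq_of_le hyx' with hlt | heq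
    · -- x' is a candidate smaller than x
      have : x' ∈ P := ⟨hlt, v, hvy, q, fun u hu => hx'max u hu⟩
      exact absurd (hxmin x' this) (not_le.mpr hx'x)
    · -- all support values ≤ A y, contradiction with hloc
      have hall : ∀ u ∈ q.support, A u ≤ A y := fun u hu => (hx'max u hu).trans heq.ge
      have hvy' : v ≠ y := fun h => absurd hvy (by rw [h]; exact lt_irrefl _)
      cases q with
      | nil => exact absurd rfl hvy'.symm
      | cons h r =>
          have := hall _ (by
            rw [SimpleGraph.Walk.support_cons]
            exact List.mem_cons_of_mem _ r.start_mem_support)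
          exact absurd (hloc _ h) (not_lt.mpr this)
  · -- second conjunct
    have hzx : A z ≤ A x := le_of_lt (hz.trans hyx)
    have hsub : ∀ u ∈ p.support, u ∈ {u : V | A u ≤ A x} := fun u hu => hp u hu
    exact ⟨z, hzx, reach_of_walk' p hsub, hz⟩
end

section
/- Let B₁ and B₂ be barcodes. Then the interleaving distance between the associated persistence modules satisfies d_int(Q(B₁), Q(B₂)) ≤ d_bot(B₁, B₂). -/
open scoped ENNReal NNReal
open Classical

noncomputable section

/-- `t` belongs to the half-open interval `(p.1, p.2]`. -/
def QmemBar (p : EReal × EReal) (t : ℝ) : Prop :=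
  p.1 < (t : EReal) ∧ (t : EReal) ≤ p.2

/-- The value `Q(B)_t = ⊕_{bars containing t} ℤ/2` of the persistence module of
an (indexed) barcode. -/
abbrev QSp {ι : Type*} (bars : ι → EReal × EReal) (t : ℝ) : Type _ :=
  {i : ι // QmemBar (bars i) t} → ZMod 2

/-- Structure maps of `Q(B)`: identity on each bar containing both parameters,
zero otherwise. -/
def QMp {ι : Type*} (bars : ι → EReal × EReal) (s t : ℝ) :
    QSp bars s →ₗ[ZMod 2] QSp bars t where
  toFun f j := if h : QmemBar (bars j.1) s then f ⟨j.1, h⟩ else 0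
  map_add' f g := by
    funext j; by_cases h : QmemBar (bars j.1) s <;> simp [h]
  map_smul' c f := by
    funext j; by_cases h : QmemBar (bars j.1) s <;> simp [h]

/-- An `ε`-interleaving between the persistence modules `Q(B₁)` and `Q(B₂)`. -/
def Interleaved {ι κ : Type*} (b1 : ι → EReal × EReal) (b2 : κ → EReal × EReal)
    (ε : ℝ≥0) : Prop :=
  ∃ (φ : ∀ s : ℝ, QSp b1 s →ₗ[ZMod 2] QSp b2 (s + ε))
    (ψ : ∀ s : ℝ, QSp b2 s →ₗ[ZMod 2] QSp b1 (s + ε)),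
    (∀ s t : ℝ, s ≤ t →
      (φ t).comp (QMp b1 s t) = (QMp b2 (s + ε) (t + ε)).comp (φ s)) ∧
    (∀ s t : ℝ, s ≤ t →
      (ψ t).comp (QMp b2 s t) = (QMp b1 (s + ε) (t + ε)).comp (ψ s)) ∧
    (∀ s : ℝ, (ψ (s + ε)).comp (φ s) = QMp b1 s (s + ε + ε)) ∧
    (∀ s : ℝ, (φ (s + ε)).comp (ψ s) = QMp b2 s (s + ε + ε))

/-- The interleaving distance between the persistence modules of two barcodes. -/
def dInt {ι κ : Type*} (b1 : ι → EReal × EReal) (b2 : κ → EReal × EReal) : ℝ≥0∞ :=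
  sInf {x : ℝ≥0∞ | ∃ ε : ℝ≥0, x = (ε : ℝ≥0∞) ∧ Interleaved b1 b2 ε}

/-- Two intervals are `ε`-close. -/
def Close (ε : ℝ≥0) (p q : EReal × EReal) : Prop :=
  p.1 ≤ q.1 + ((ε : ℝ) : EReal) ∧ q.1 ≤ p.1 + ((ε : ℝ) : EReal) ∧
  p.2 ≤ q.2 + ((ε : ℝ) : EReal) ∧ q.2 ≤ p.2 + ((ε : ℝ) : EReal)

/-- A bar of length at most `2ε`. -/
def Short (ε : ℝ≥0) (p : EReal × EReal) : Prop :=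
  p.2 ≤ p.1 + ((2 * ε : ℝ) : EReal)

/-- An `ε`-matching between two indexed barcodes. -/
def Matched {ι κ : Type*} (b1 : ι → EReal × EReal) (b2 : κ → EReal × EReal)
    (ε : ℝ≥0) : Prop :=
  ∃ (I : Set ι) (K : Set κ) (σ : I ≃ K),
    (∀ i : I, Close ε (b1 i) (b2 (σ i))) ∧
    (∀ i : ι, i ∉ I → Short ε (b1 i)) ∧
    (∀ k : κ, k ∉ K → Short ε (b2 k))

/-- The bottleneck distance between two indexed barcodes. -/
def dBotI {ι κ : Type*} (b1 : ι → EReal × EReal) (b2 : κ → EReal × EReal) : ℝ≥0∞ :=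
  sInf {x : ℝ≥0∞ | ∃ ε : ℝ≥0, x = (ε : ℝ≥0∞) ∧ Matched b1 b2 ε}

namespace Stmt12Aux

variable {ι κ : Type*}

lemma cancel {x y : EReal} {c : ℝ} (h : x + (c : EReal) ≤ y + (c : EReal)) : x ≤ y :=
  ((EReal.addLECancellable_coe c).add_le_add_iff_right).1 h

/-- One direction of the interleaving maps induced by a matching. -/
def matchMap (b1 : ι → EReal × EReal) (b2 : κ → EReal × EReal)
    (ε : ℝ≥0) (I : Set ι) (K : Set κ) (σ : I ≃ K) (s : ℝ) :
    QSp b1 s →ₗ[ZMod 2] QSp b2 (s + ε) where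
  toFun f j :=
    if hk : j.1 ∈ K then
      if h : QmemBar (b1 (σ.symm ⟨j.1, hk⟩).1) s then f ⟨(σ.symm ⟨j.1, hk⟩).1, h⟩ else 0
    else 0
  map_add' f g := by
    funext j
    by_cases hk : j.1 ∈ K
    · by_cases h : QmemBar (b1 (σ.symm ⟨j.1, hk⟩).1) s <;> simp [hk, h]
    · simp [hk]
  map_smul' c f := by
    funext j
    by_cases hk : j.1 ∈ K
    · by_cases h : QmemBar (b1 (σ.symm ⟨j.1, hk⟩).1) s <;> simp [hk, h]
    · simp [hk]

lemma matchMap_comm (b1 : ι → EReal × EReal) (b2 : κ → EReal × EReal)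
    (ε : ℝ≥0) (I : Set ι) (K : Set κ) (σ : I ≃ K)
    (hcl : ∀ i : I, (b2 (σ i)).1 ≤ (b1 i).1 + ((ε : ℝ) : EReal) ∧
                    (b2 (σ i)).2 ≤ (b1 i).2 + ((ε : ℝ) : EReal))
    (s t : ℝ) (hst : s ≤ t) :
    (matchMap b1 b2 ε I K σ t).comp (QMp b1 s t)
      = (QMp b2 (s + ε) (t + ε)).comp (matchMap b1 b2 ε I K σ s) := by
  apply LinearMap.ext; intro f
  funext j
  by_cases hk : j.1 ∈ K
  · set i := σ.symm ⟨j.1, hk⟩ with hi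
    have hσi : (σ i : κ) = j.1 := by rw [hi, Equiv.apply_symm_apply]
    obtain ⟨hc, hd⟩ := hcl i
    rw [hσi] at hc hd
    have hj2 := j.2
    obtain ⟨hj2a, hj2b⟩ := hj2
    have hcoet : ((t + (ε : ℝ) : ℝ) : EReal) = (t : EReal) + ((ε : ℝ) : EReal) :=
      EReal.coe_add t ε
    have hcoes : ((s + (ε : ℝ) : ℝ) : EReal) = (s : EReal) + ((ε : ℝ) : EReal) :=
      EReal.coe_add s ε
    by_cases hm : QmemBar (b1 i.1) s
    · have hm1t : QmemBar (b1 i.1) t := by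
        constructor
        · exact lt_of_lt_of_le hm.1 (EReal.coe_le_coe_iff.2 hst)
        · refine cancel (c := (ε : ℝ)) ?_
          calc (t : EReal) + ((ε : ℝ) : EReal) = ((t + (ε : ℝ) : ℝ) : EReal) := hcoet.symm
            _ ≤ (b2 j.1).2 := hj2b
            _ ≤ (b1 i.1).2 + ((ε : ℝ) : EReal) := hd
      have hm2s : QmemBar (b2 j.1) (s + ε) := by
        constructor
        · rw [hcoes]
          exact lt_of_le_of_lt hc (EReal.add_lt_add_right_coe hm.1 _)
        · rw [hcoes]
          calc (s : EReal) + ((ε : ℝ) : EReal)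
              ≤ (t : EReal) + ((ε : ℝ) : EReal) := by
                exact add_le_add (EReal.coe_le_coe_iff.2 hst) le_rfl
            _ = ((t + (ε : ℝ) : ℝ) : EReal) := hcoet.symm
            _ ≤ (b2 j.1).2 := hj2b
      simp [matchMap, QMp, hk, ← hi, hm, hm1t, hm2s]
    · have : ∀ h', (QMp b1 s t f) ⟨i.1, h'⟩ = 0 := by
        intro h'; simp [QMp, hm]
      by_cases hm1t : QmemBar (b1 i.1) t <;>
        by_cases hm2s : QmemBar (b2 j.1) (s + ε) <;>
          simp [matchMap, QMp, hk, ← hi, hm, hm1t, hm2s]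
  · by_cases hm2s : QmemBar (b2 j.1) (s + ε) <;>
      simp [matchMap, QMp, hk, hm2s]

lemma matchMap_tri (b1 : ι → EReal × EReal) (b2 : κ → EReal × EReal)
    (ε : ℝ≥0) (I : Set ι) (K : Set κ) (σ : I ≃ K)
    (hcl : ∀ i : I, (b2 (σ i)).1 ≤ (b1 i).1 + ((ε : ℝ) : EReal) ∧
                    (b1 i).2 ≤ (b2 (σ i)).2 + ((ε : ℝ) : EReal))
    (hsh : ∀ i, i ∉ I → Short ε (b1 i)) (s : ℝ) :
    (matchMap b2 b1 ε K I σ.symm (s + ε)).comp (matchMap b1 b2 ε I K σ s)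
      = QMp b1 s (s + ε + ε) := by
  apply LinearMap.ext; intro f
  funext j
  obtain ⟨hj2a, hj2b⟩ := j.2
  have hcoe2 : ((s + (ε : ℝ) + (ε : ℝ) : ℝ) : EReal)
      = (s : EReal) + ((2 * (ε : ℝ) : ℝ) : EReal) := by
    rw [show (s + (ε : ℝ) + (ε : ℝ) : ℝ) = s + 2 * (ε : ℝ) by ring, EReal.coe_add]
  by_cases hm : QmemBar (b1 j.1) s
  · have hi : j.1 ∈ I := by
      by_contra hni
      have hshj := hsh j.1 hni
      have h1 : (s : EReal) + ((2 * (ε : ℝ) : ℝ) : EReal) ≤ (b1 j.1).2 := by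
        rw [← hcoe2]; exact hj2b
      have h2 : (b1 j.1).2 ≤ (b1 j.1).1 + ((2 * (ε : ℝ) : ℝ) : EReal) := hshj
      have h3 : (b1 j.1).1 + ((2 * (ε : ℝ) : ℝ) : EReal)
          < (s : EReal) + ((2 * (ε : ℝ) : ℝ) : EReal) :=
        EReal.add_lt_add_right_coe hm.1 _
      exact lt_irrefl _ (lt_of_le_of_lt (le_trans h1 h2) h3)
    obtain ⟨hc, hd⟩ := hcl ⟨j.1, hi⟩
    have hcoes : ((s + (ε : ℝ) : ℝ) : EReal) = (s : EReal) + ((ε : ℝ) : EReal) :=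
      EReal.coe_add s ε
    have hm2 : QmemBar (b2 (σ ⟨j.1, hi⟩).1) (s + ε) := by
      constructor
      · rw [hcoes]
        exact lt_of_le_of_lt hc (EReal.add_lt_add_right_coe hm.1 _)
      · rw [hcoes]
        refine cancel (c := (ε : ℝ)) ?_
        calc (s : EReal) + ((ε : ℝ) : EReal) + ((ε : ℝ) : EReal)
            = ((s + (ε : ℝ) + (ε : ℝ) : ℝ) : EReal) := by rw [EReal.coe_add, EReal.coe_add]
          _ ≤ (b1 j.1).2 := hj2b
          _ ≤ (b2 (σ ⟨j.1, hi⟩).1).2 + ((ε : ℝ) : EReal) := hd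
    simp only [matchMap, QMp, LinearMap.coe_comp, LinearMap.coe_mk, AddHom.coe_mk,
      Function.comp_apply, Equiv.symm_symm]
    rw [dif_pos hi, dif_pos hm2, dif_pos (σ ⟨j.1, hi⟩).2]
    simp only [Subtype.coe_eta, Equiv.symm_apply_apply]
  · simp only [matchMap, QMp, LinearMap.coe_comp, LinearMap.coe_mk, AddHom.coe_mk,
      Function.comp_apply, Equiv.symm_symm]
    rw [dif_neg hm]
    by_cases hi : j.1 ∈ I
    · rw [dif_pos hi]
      by_cases hm2 : QmemBar (b2 (σ ⟨j.1, hi⟩).1) (s + ε)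
      · rw [dif_pos hm2, dif_pos (σ ⟨j.1, hi⟩).2]
        simp only [Subtype.coe_eta, Equiv.symm_apply_apply]
        rw [dif_neg hm]
      · rw [dif_neg hm2]
    · rw [dif_neg hi]

lemma interleaved_of_matched (b1 : ι → EReal × EReal) (b2 : κ → EReal × EReal)
    (ε : ℝ≥0) (h : Matched b1 b2 ε) : Interleaved b1 b2 ε := by
  obtain ⟨I, K, σ, hcl, hs1, hs2⟩ := h
  have hcl' : ∀ k : K, Close ε (b2 k) (b1 (σ.symm k)) := by
    intro k
    have := hcl (σ.symm k)
    rw [Equiv.apply_symm_apply] at this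
    exact ⟨this.2.1, this.1, this.2.2.2, this.2.2.1⟩
  refine ⟨matchMap b1 b2 ε I K σ, matchMap b2 b1 ε K I σ.symm, ?_, ?_, ?_, ?_⟩
  · exact matchMap_comm b1 b2 ε I K σ
      (fun i => ⟨(hcl i).2.1, (hcl i).2.2.2⟩)
  · exact matchMap_comm b2 b1 ε K I σ.symm
      (fun k => ⟨(hcl' k).2.1, (hcl' k).2.2.2⟩)
  · exact matchMap_tri b1 b2 ε I K σ
      (fun i => ⟨(hcl i).2.1, (hcl i).2.2.1⟩) hs1
  · have := matchMap_tri b2 b1 ε K I σ.symm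
      (fun k => ⟨(hcl' k).2.1, (hcl' k).2.2.1⟩) hs2
    rwa [Equiv.symm_symm] at this

end Stmt12Aux

/-- The interleaving distance of the persistence modules associated to two
barcodes is at most their bottleneck distance. -/
theorem stmt12 {ι κ : Type*} [Fintype ι] [Fintype κ]
    (b1 : ι → EReal × EReal) (b2 : κ → EReal × EReal)
    (hb1 : ∀ i, (b1 i).1 ≤ (b1 i).2) (hb2 : ∀ k, (b2 k).1 ≤ (b2 k).2) :
    dInt b1 b2 ≤ dBotI b1 b2 := by
  apply sInf_le_sInf
  rintro x ⟨ε, rfl, hm⟩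
  exact ⟨ε, rfl, Stmt12Aux.interleaved_of_matched b1 b2 ε hm⟩

end
end
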